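/- For every λ > 0 there exists ρ₀ > 0 such that for all ρ ≥ ρ₀, f₋''(ρ) + 2 (cosh ρ / sinh ρ) f₋'(ρ) − (3/4) f₋(ρ) ((f₋(ρ))⁴ − 1) > 0, where f₋(ρ) = 1 − λ e^{−3ρ}. -/

import Mathlib

/-!
With `u = λ e^{-3ρ}` one has `f₋' = 3u` and `f₋'' = -9u`, while the reaction term is at least
`3u - (15/2)u²`, so `L f₋ ≥ 6u (coth ρ - 1) - (15/2)u²`. Since `coth ρ - 1 > 2e^{-2ρ}` and
`u ≤ e^{-2ρ}` as soon as `λ ≤ e^ρ`, the right-hand side exceeds `12u² - (15/2)u² > 0`.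
-/

open Real

lemma hasDerivAt_mul_exp_mul (a c r : ℝ) :
    HasDerivAt (fun r => a * exp (c * r)) (a * c * exp (c * r)) r := by
  have h := (((hasDerivAt_id' r).const_mul c).exp).const_mul a
  rw [mul_one] at h
  exact h.congr_deriv (by ring)

lemma deriv_mul_exp_mul (a c : ℝ) :
    deriv (fun r => a * exp (c * r)) = fun r => a * c * exp (c * r) :=
  funext fun r => (hasDerivAt_mul_exp_mul a c r).deriv

lemma deriv_const_sub_mul_exp_mul (b a c : ℝ) :
    deriv (fun r => b - a * exp (c * r)) = fun r => -(a * c) * exp (c * r) := by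
  rw [deriv_const_sub', deriv_mul_exp_mul]
  simp only [neg_mul]

lemma two_mul_exp_neg_two_mul_lt_cosh_div_sinh_sub_one {ρ : ℝ} (hρ : 0 < ρ) :
    2 * exp (-2 * ρ) < cosh ρ / sinh ρ - 1 := by
  have hsinh : 0 < sinh ρ := sinh_pos_iff.mpr hρ
  have hsinh_lt : sinh ρ < exp ρ / 2 := by
    rw [sinh_eq]
    linarith [exp_pos (-ρ)]
  have hcoth : cosh ρ / sinh ρ - 1 = exp (-ρ) / sinh ρ := by
    rw [← cosh_sub_sinh, sub_div, div_self hsinh.ne']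
  calc 2 * exp (-2 * ρ) = exp (-ρ) / (exp ρ / 2) := by
        rw [div_div_eq_mul_div, eq_div_iff (exp_pos ρ).ne', mul_assoc, ← exp_add]
        ring_nf
    _ < cosh ρ / sinh ρ - 1 := by
        rw [hcoth]
        exact div_lt_div_of_pos_left (exp_pos _) hsinh hsinh_lt

-- The remainder is `u³ (3/4) ((u - 5/2)² + 15/4) ≥ 0`.
lemma reaction_term_ge {u : ℝ} (hu : 0 ≤ u) :
    3 * u - 15 / 2 * u ^ 2 ≤ -(3 / 4) * (1 - u) * ((1 - u) ^ 4 - 1) := by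
  have h : 0 ≤ u ^ 3 * ((u - 5 / 2) ^ 2 + 15 / 4) := by positivity
  nlinarith [h]

lemma mul_exp_neg_three_mul_le {l ρ : ℝ} (hρ : log l ≤ ρ) :
    l * exp (-3 * ρ) ≤ exp (-2 * ρ) :=
  calc l * exp (-3 * ρ) ≤ exp ρ * exp (-3 * ρ) := by
        gcongr
        exact (le_exp_log l).trans (exp_le_exp.mpr hρ)
    _ = exp (-2 * ρ) := by rw [← exp_add]; ring_nf

/-- For every `λ > 0` there exists `ρ₀ > 0` such that for all `ρ ≥ ρ₀`,
the lower barrier `f₋(ρ) = 1 − λ e^{−3ρ}` satisfies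
`f₋'' + 2 coth(ρ) f₋' − (3/4) f₋ (f₋⁴ − 1) > 0`. -/
theorem barrier_subsolution_eventually (l : ℝ) (hl : 0 < l) :
    ∃ ρ₀ : ℝ, 0 < ρ₀ ∧ ∀ ρ : ℝ, ρ₀ ≤ ρ →
      deriv (deriv (fun r => 1 - l * Real.exp (-3 * r))) ρ
        + 2 * (Real.cosh ρ / Real.sinh ρ)
            * deriv (fun r => 1 - l * Real.exp (-3 * r)) ρ
        - (3 / 4) * (1 - l * Real.exp (-3 * ρ))
            * ((1 - l * Real.exp (-3 * ρ)) ^ 4 - 1) > 0 := by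
  refine ⟨max 1 (log l), by positivity, fun ρ hρ => ?_⟩
  have hρ_pos : 0 < ρ := one_pos.trans_le ((le_max_left _ _).trans hρ)
  have hu_le := mul_exp_neg_three_mul_le ((le_max_right _ _).trans hρ)
  have hcoth := two_mul_exp_neg_two_mul_lt_cosh_div_sinh_sub_one hρ_pos
  rw [deriv_const_sub_mul_exp_mul, deriv_mul_exp_mul]
  set u := l * exp (-3 * ρ)
  have hu_pos : 0 < u := by positivity
  have hreaction := reaction_term_ge hu_pos.le
  nlinarith [mul_lt_mul_of_pos_left hcoth hu_pos, mul_le_mul_of_nonneg_left hu_le hu_pos.le]
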